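/- Let (β_j)_{j=1}^n be positive reals and φ : ℝ≥0 → ℝ≥0 increasing with φ(0)=0 and t/φ(t) non-decreasing on (0,∞). For λ > 0 and x = Σ_j x_j e_j in a Hilbert space with orthonormal basis (e_j), ‖Σ_j (λ β_j²/(1 + λ β_j²)) x_j e_j‖ ≤ φ(λ) · (Σ_j |x_j|²/φ(β_j^{-2})²)^{1/2}. -/

import Mathlib

/-!
With `u = β⁻²` the residual filter is `λ / (u + λ)`, and it is at most `φ λ / φ u`:
for `u ≤ λ` it is below `1 ≤ φ λ / φ u` by monotonicity of `φ`, and for `λ ≤ u` it is below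
`λ / u ≤ φ λ / φ u` by monotonicity of `t / φ t`. Parseval in the orthonormal basis turns this
coefficientwise bound into the norm bound.
-/

open Real Set

theorem Orthonormal.norm_sum_smul {ι H : Type*} [Fintype ι] [NormedAddCommGroup H]
    [InnerProductSpace ℝ H] {v : ι → H} (hv : Orthonormal ℝ v) (a : ι → ℝ) :
    ‖∑ i, a i • v i‖ = √(∑ i, a i ^ 2) := by
  rw [← sqrt_sq (norm_nonneg _), ← real_inner_self_eq_norm_sq, hv.inner_sum]
  simp [sq]

theorem div_add_le_div_apply_of_monotoneOn {φ : ℝ → ℝ} (hmono : MonotoneOn φ (Ioi 0))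
    (hpos : ∀ t, 0 < t → 0 < φ t) (hq : MonotoneOn (fun t ↦ t / φ t) (Ioi 0))
    {lam u : ℝ} (hlam : 0 < lam) (hu : 0 < u) :
    lam / (u + lam) ≤ φ lam / φ u := by
  have hφu := hpos u hu
  rcases le_total u lam with h | h
  · calc lam / (u + lam) ≤ 1 := (div_le_one (by positivity)).2 (by linarith)
      _ ≤ φ lam / φ u := (one_le_div hφu).2 (hmono hu hlam h)
  · calc lam / (u + lam) ≤ lam / u := div_le_div_of_nonneg_left hlam.le hu (by linarith)
      _ ≤ φ lam / φ u := by
        have := hq hlam hu h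
        rw [div_le_div_iff₀ hu hφu]
        rwa [div_le_div_iff₀ (hpos lam hlam) hφu, mul_comm u] at this

theorem mul_sq_div_one_add_mul_sq_eq_div_inv_add {lam b : ℝ} (hb : b ≠ 0) :
    lam * b ^ 2 / (1 + lam * b ^ 2) = lam / ((b ^ 2)⁻¹ + lam) := by
  field_simp

theorem sqrt_sum_sq_le_mul_sqrt_sum_sq {ι : Type*} (s : Finset ι) {a b : ι → ℝ} {C : ℝ}
    (hC : 0 ≤ C) (h : ∀ i ∈ s, |a i| ≤ C * |b i|) :
    √(∑ i ∈ s, a i ^ 2) ≤ C * √(∑ i ∈ s, b i ^ 2) :=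
  calc √(∑ i ∈ s, a i ^ 2) ≤ √(∑ i ∈ s, (C * b i) ^ 2) :=
        sqrt_le_sqrt <| Finset.sum_le_sum fun i hi ↦
          sq_le_sq.2 <| by rw [abs_mul, abs_of_nonneg hC]; exact h i hi
    _ = C * √(∑ i ∈ s, b i ^ 2) := by
        simp_rw [mul_pow, ← Finset.mul_sum, sqrt_mul (sq_nonneg C), sqrt_sq hC]

theorem presmoothing_residual_source_bound_general {H : Type*} [NormedAddCommGroup H]
    [InnerProductSpace ℝ H] {n : ℕ} (e : OrthonormalBasis (Fin n) ℝ H)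
    (β : Fin n → ℝ) (hβ : ∀ j, 0 < β j)
    (φ : ℝ → ℝ) (hφmono : MonotoneOn φ (Set.Ici 0))
    (hφpos : ∀ t : ℝ, 0 < t → 0 < φ t)
    (hq : ∀ s t : ℝ, 0 < s → s ≤ t → s / φ s ≤ t / φ t)
    (lam : ℝ) (hlam : 0 < lam) (x : Fin n → ℝ) :
    ‖∑ j, ((lam * (β j) ^ 2 / (1 + lam * (β j) ^ 2)) * x j) • e j‖ ≤
      φ lam * Real.sqrt (∑ j, (x j) ^ 2 / (φ (((β j) ^ 2)⁻¹)) ^ 2) := by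
  have hfilter : ∀ j, |lam * β j ^ 2 / (1 + lam * β j ^ 2) * x j| ≤
      φ lam * |x j / φ (β j ^ 2)⁻¹| := by
    intro j
    have hu : 0 < (β j ^ 2)⁻¹ := by have := hβ j; positivity
    rw [mul_sq_div_one_add_mul_sq_eq_div_inv_add (hβ j).ne', abs_mul,
      abs_of_nonneg (by positivity), abs_div, abs_of_pos (hφpos _ hu)]
    calc lam / ((β j ^ 2)⁻¹ + lam) * |x j| ≤ φ lam / φ (β j ^ 2)⁻¹ * |x j| :=
          mul_le_mul_of_nonneg_right (div_add_le_div_apply_of_monotoneOn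
            (hφmono.mono Ioi_subset_Ici_self) hφpos (fun s hs t _ hst ↦ hq s t hs hst) hlam hu)
            (abs_nonneg _)
      _ = φ lam * (|x j| / φ (β j ^ 2)⁻¹) := by ring
  rw [e.orthonormal.norm_sum_smul]
  simp_rw [← div_pow]
  exact sqrt_sum_sq_le_mul_sqrt_sum_sq _ (hφpos lam hlam).le fun j _ ↦ hfilter j

theorem presmoothing_residual_source_bound {H : Type*} [NormedAddCommGroup H]
    [InnerProductSpace ℝ H] {n : ℕ} (e : OrthonormalBasis (Fin n) ℝ H)
    (β : Fin n → ℝ) (hβ : ∀ j, 0 < β j)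
    (φ : ℝ → ℝ) (hφ0 : φ 0 = 0) (hφmono : MonotoneOn φ (Set.Ici 0))
    (hφpos : ∀ t : ℝ, 0 < t → 0 < φ t)
    (hq : ∀ s t : ℝ, 0 < s → s ≤ t → s / φ s ≤ t / φ t)
    (lam : ℝ) (hlam : 0 < lam) (x : Fin n → ℝ) :
    ‖∑ j, ((lam * (β j) ^ 2 / (1 + lam * (β j) ^ 2)) * x j) • e j‖ ≤
      φ lam * Real.sqrt (∑ j, (x j) ^ 2 / (φ (((β j) ^ 2)⁻¹)) ^ 2) :=
  presmoothing_residual_source_bound_general e β hβ φ hφmono hφpos hq lam hlam x
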